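/- arXiv:2402.00315 — 3 statements merged into one kernel-verified Lean document; each statement's English description precedes it below -/
import Mathlib

section
/- Let Y = [M], let f_1,...,f_K be probability distributions on Y, and let T ≥ 2 be an integer. Set N' = ∑_{y∈Y} ⌈M·max_{j∈[K]} f_j[y]⌉, fix a partition {S_y}_{y∈Y} of [N'] with |S_y| = ⌈M·max_{j∈[K]} f_j[y]⌉, and for each j define the distribution h∘f_j on [N'] by (h∘f_j)[y'] = (1−1/T)·f_j[y]/|S_y| + 1/(T·N') for y' ∈ S_y. Then M ≤ N' ≤ (K+1)·M, and consequently 1/(T·(K+1)·M) ≤ (h∘f_j)[y'] ≤ 1/M for every j ∈ [K] and every y' ∈ [N']. In particular, each log-likelihood map y' ↦ log((h∘f_j)[y']) has range contained in an interval of length log((K+1)·T). -/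
open Finset

/-- `p` is a probability distribution on the finite set `Y`. -/
def IsDist {Y : Type*} [Fintype Y] (p : Y → ℝ) : Prop :=
  (∀ y, 0 ≤ p y) ∧ ∑ y, p y = 1

/-! Every block `S y` has at least `M · f j y` points, so splitting the mass `f j y` over it leaves
at most `1/M` per point, while the uniform component alone contributes `1/(T·N')`. The size `N'`
lies between `M` (the ceilings dominate `M · f j`, which sums to `M`) and `(K+1)·M` (the maximum is
at most the sum over `j`, and each ceiling adds less than `1`). -/

section CeilSum

variable {κ Y : Type*} {f : κ → Y → ℝ} {c : ℝ}

lemma mul_le_ceil_mul_iSup [Finite κ] (hc : 0 ≤ c) (j : κ) (y : Y) :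
    c * f j y ≤ ⌈c * ⨆ i, f i y⌉₊ :=
  (mul_le_mul_of_nonneg_left (le_ciSup (f := fun i => f i y) (Set.finite_range _).bddAbove j) hc).trans
    (Nat.le_ceil _)

variable [Fintype Y]

lemma le_sum_ceil_mul_iSup [Finite κ] (hc : 0 ≤ c) (j : κ) (hj : IsDist (f j)) :
    c ≤ ∑ y, (⌈c * ⨆ i, f i y⌉₊ : ℝ) :=
  calc c = ∑ y, c * f j y := by rw [← mul_sum, hj.2, mul_one]
    _ ≤ _ := sum_le_sum fun y _ => mul_le_ceil_mul_iSup hc j y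

lemma iSup_le_sum_of_nonneg [Fintype κ] {u : κ → ℝ} (hu : ∀ i, 0 ≤ u i) :
    ⨆ i, u i ≤ ∑ i, u i :=
  Real.iSup_le (fun i => single_le_sum (fun i _ => hu i) (mem_univ i)) (sum_nonneg fun i _ => hu i)

lemma sum_ceil_mul_iSup_le [Fintype κ] (hc : 0 ≤ c) (hf : ∀ j, IsDist (f j)) :
    ∑ y, (⌈c * ⨆ i, f i y⌉₊ : ℝ) ≤ Fintype.card κ * c + Fintype.card Y :=
  calc ∑ y, (⌈c * ⨆ i, f i y⌉₊ : ℝ) ≤ ∑ y, (c * ∑ i, f i y + 1) := by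
        refine sum_le_sum fun y _ => ?_
        have hsup := iSup_le_sum_of_nonneg fun i => (hf i).1 y
        have hceil := Nat.ceil_lt_add_one
          (mul_nonneg hc (Real.iSup_nonneg fun i => (hf i).1 y))
        nlinarith
    _ = c * ∑ i, ∑ y, f i y + Fintype.card Y := by
        rw [sum_add_distrib, ← mul_sum, sum_comm]; simp
    _ = Fintype.card κ * c + Fintype.card Y := by simp [fun i => (hf i).2, mul_comm]

end CeilSum

/-- `(h ∘ f_j)[y']` for `y' ∈ S_y`, with `a = f_j[y]`, `s = |S_y|` and `N = N'`. -/
noncomputable def clipValue (T N a s : ℝ) : ℝ :=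
  (1 - 1 / T) * a / s + 1 / (T * N)

section ClipValue

variable {T N a s : ℝ}

lemma one_sub_one_div_nonneg (hT : 1 ≤ T) : 0 ≤ 1 - 1 / T :=
  sub_nonneg.2 (div_le_one_of_le₀ hT (zero_le_one.trans hT))

lemma one_div_le_clipValue (hT : 1 ≤ T) (ha : 0 ≤ a) (hs : 0 ≤ s) :
    1 / (T * N) ≤ clipValue T N a s :=
  le_add_of_nonneg_left (div_nonneg (mul_nonneg (one_sub_one_div_nonneg hT) ha) hs)

lemma clipValue_le_one_div {M : ℝ} (hT : 1 ≤ T) (hM : 0 < M) (hMN : M ≤ N) (hs : 0 < s)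
    (has : M * a ≤ s) : clipValue T N a s ≤ 1 / M := by
  have hT0 : 0 < T := zero_lt_one.trans_le hT
  have hmass : (1 - 1 / T) * a / s ≤ (1 - 1 / T) * (1 / M) := by
    rw [mul_div_assoc]
    refine mul_le_mul_of_nonneg_left ?_ (one_sub_one_div_nonneg hT)
    rw [div_le_div_iff₀ hs hM]
    linarith
  have hunif : 1 / (T * N) ≤ 1 / T * (1 / M) := by
    rw [one_div_mul_one_div]
    exact one_div_le_one_div_of_le (by positivity) (mul_le_mul_of_nonneg_left hMN hT0.le)
  calc clipValue T N a s ≤ (1 - 1 / T) * (1 / M) + 1 / T * (1 / M) := add_le_add hmass hunif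
    _ = 1 / M := by ring

end ClipValue

lemma Real.log_sub_log_le_log_div {x y m U : ℝ} (hm : 0 < m) (hx : m ≤ x) (hy : m ≤ y)
    (hxU : x ≤ U) : Real.log x - Real.log y ≤ Real.log (U / m) := by
  have hx0 := hm.trans_le hx
  have hy0 := hm.trans_le hy
  rw [← Real.log_div hx0.ne' hy0.ne']
  exact Real.log_le_log (div_pos hx0 hy0) (div_le_div₀ (hx0.le.trans hxU) hxU hm hy)

theorem clipping_bounds_general (M K T : ℕ) (hK : 1 ≤ K) (hT : 2 ≤ T)
    (f : Fin K → Fin M → ℝ) (hf : ∀ j, IsDist (f j))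
    (N' : ℕ) (hN' : N' = ∑ y : Fin M, ⌈(M : ℝ) * ⨆ j, f j y⌉₊)
    (S : Fin M → Finset (Fin N'))
    (hScard : ∀ y, (S y).card = ⌈(M : ℝ) * ⨆ j, f j y⌉₊)
    (hScover : ∀ v : Fin N', ∃ y, v ∈ S y)
    (g : Fin K → Fin N' → ℝ)
    (hg : ∀ j y v, v ∈ S y →
      g j v = (1 - 1 / (T : ℝ)) * f j y / (S y).card + 1 / ((T : ℝ) * N')) :
    M ≤ N' ∧ N' ≤ (K + 1) * M ∧
    (∀ j v, 1 / ((T : ℝ) * (K + 1) * M) ≤ g j v ∧ g j v ≤ 1 / (M : ℝ)) ∧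
    (∀ j v v', Real.log (g j v) - Real.log (g j v') ≤ Real.log (((K : ℝ) + 1) * T)) := by
  have hT1 : (1 : ℝ) ≤ T := by exact_mod_cast one_le_two.trans hT
  have hN'R : (N' : ℝ) = ∑ y : Fin M, (⌈(M : ℝ) * ⨆ j, f j y⌉₊ : ℝ) := by rw [hN']; push_cast; rfl
  have hMN : (M : ℝ) ≤ N' := hN'R ▸ le_sum_ceil_mul_iSup M.cast_nonneg ⟨0, hK⟩ (hf _)
  have hNK : (N' : ℝ) ≤ (K + 1) * M := by
    have := sum_ceil_mul_iSup_le M.cast_nonneg hf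
    rw [Fintype.card_fin, Fintype.card_fin] at this
    linarith
  have hM : Fin N' → (0 : ℝ) < M := fun v => by exact_mod_cast (hScover v).choose.pos
  have hbounds : ∀ j v, 1 / ((T : ℝ) * (K + 1) * M) ≤ g j v ∧ g j v ≤ 1 / (M : ℝ) := by
    intro j v
    obtain ⟨y, hv⟩ := hScover v
    have hs : (0 : ℝ) < (S y).card := by exact_mod_cast card_pos.2 ⟨v, hv⟩
    have has : (M : ℝ) * f j y ≤ (S y).card := hScard y ▸ mul_le_ceil_mul_iSup M.cast_nonneg j y
    rw [hg j y v hv]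
    refine ⟨le_trans ?_ (one_div_le_clipValue hT1 ((hf j).1 y) hs.le),
      clipValue_le_one_div hT1 (hM v) hMN hs has⟩
    rw [mul_assoc]
    exact one_div_le_one_div_of_le (mul_pos (by linarith) ((hM v).trans_le hMN))
      (mul_le_mul_of_nonneg_left hNK (by positivity))
  refine ⟨by exact_mod_cast hMN, by exact_mod_cast hNK, hbounds, fun j v v' => ?_⟩
  have hM₀ := hM v
  convert Real.log_sub_log_le_log_div (by positivity) (hbounds j v).1 (hbounds j v').1
    (hbounds j v).2 using 2
  field_simp

/-- **Bounds for the clipping construction.**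
Let `f 1, …, f K` be distributions on `[M]`, let `N' = ∑_y ⌈M · max_j f j y⌉`, let
`{S y}_{y}` be a partition of `[N']` into blocks with `|S y| = ⌈M · max_j f j y⌉`, and let
`g j` be the clipped distribution `h ∘ f j` on `[N']`, i.e.
`g j y' = (1 − 1/T) · f j y / |S y| + 1/(T·N')` for `y' ∈ S y`.  Then `M ≤ N' ≤ (K+1)·M`,
consequently `1/(T·(K+1)·M) ≤ g j y' ≤ 1/M` for every `j` and `y'`, and in particular each
log-likelihood map `y' ↦ log (g j y')` has range contained in an interval of length
`log((K+1)·T)`. -/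
theorem clipping_bounds (M K T : ℕ) (hM : 1 ≤ M) (hK : 1 ≤ K) (hT : 2 ≤ T)
    (f : Fin K → Fin M → ℝ) (hf : ∀ j, IsDist (f j))
    (N' : ℕ) (hN' : N' = ∑ y : Fin M, ⌈(M : ℝ) * ⨆ j, f j y⌉₊)
    (S : Fin M → Finset (Fin N'))
    (hScard : ∀ y, (S y).card = ⌈(M : ℝ) * ⨆ j, f j y⌉₊)
    (hSdisj : ∀ y y', y ≠ y' → Disjoint (S y) (S y'))
    (hScover : ∀ v : Fin N', ∃ y, v ∈ S y)
    (g : Fin K → Fin N' → ℝ)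
    (hg : ∀ j y v, v ∈ S y →
      g j v = (1 - 1 / (T : ℝ)) * f j y / (S y).card + 1 / ((T : ℝ) * N')) :
    M ≤ N' ∧ N' ≤ (K + 1) * M ∧
    (∀ j v, 1 / ((T : ℝ) * (K + 1) * M) ≤ g j v ∧ g j v ≤ 1 / (M : ℝ)) ∧
    (∀ j v v', Real.log (g j v) - Real.log (g j v') ≤ Real.log (((K : ℝ) + 1) * T)) :=
  clipping_bounds_general M K T hK hT f hf N' hN' S hScard hScover g hg
end

section
/- Let S be a finite set of size N, let T > 1 be a real number, let u be the uniform distribution on S, let p and q be probability distributions on S with q[y] > 0 for all y, and set p' = (1 − 1/T)·p + (1/T)·u. Suppose R ≥ 1 satisfies 1/R ≤ p'[y]/q[y] ≤ R for all y ∈ S. Then KL(p, q) ≤ KL(p', q) + (2·log R)/T − log(1 − 1/T). -/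
open Finset

/-- Kullback–Leibler divergence between distributions on a finite set
(real-valued formula, with the convention `0 · log 0 = 0`). -/
noncomputable def klR {Y : Type*} [Fintype Y] (p q : Y → ℝ) : ℝ :=
  ∑ y, p y * Real.log (p y / q y)

/-!
Since `(1 - 1/T) p ≤ p'`, replacing `p` by `p'` inside the logarithm of `KL(p, q)` costs at most
`-log(1 - 1/T)`. The remaining cross term `∑ p log(p'/q) - KL(p', q) = (1/T) ∑ (p - u) log(p'/q)`
is at most `(1/T) · ‖p - u‖₁ · log R ≤ 2 log R / T`, because `|log(p'/q)| ≤ log R`.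
-/

open Real

lemma abs_log_le_log_of_inv_le_of_le {x R : ℝ} (hx : 0 < x) (h₁ : 1 / R ≤ x) (h₂ : x ≤ R) :
    |log x| ≤ log R := by
  have hR : 0 < R := hx.trans_le h₂
  rw [abs_le]
  refine ⟨?_, log_le_log hx h₂⟩
  simpa only [one_div, log_inv, neg_le_neg_iff] using log_le_log (by positivity) h₁

lemma mul_log_div_le_mul_log_div {x y q : ℝ} (hx : 0 ≤ x) (hxy : x ≤ y) (hq : 0 < q) :
    x * log (x / q) ≤ x * log (y / q) := by
  rcases hx.eq_or_lt with rfl | hx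
  · simp
  · gcongr

lemma klR_le_sum_mul_log_div_sub_log {Y : Type*} [Fintype Y] {p p' q : Y → ℝ} {α : ℝ}
    (hp : IsDist p) (hα : 0 < α) (hq : ∀ y, 0 < q y) (hle : ∀ y, α * p y ≤ p' y) :
    klR p q ≤ ∑ y, p y * log (p' y / q y) - log α := by
  have hpos : ∀ y, 0 < p y → 0 < p' y := fun y hy => (mul_pos hα hy).trans_le (hle y)
  calc klR p q ≤ ∑ y, p y * log (p' y / α / q y) :=
        sum_le_sum fun y _ => mul_log_div_le_mul_log_div (hp.1 y)
          ((le_div_iff₀' hα).2 (hle y)) (hq y)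
    _ = ∑ y, (p y * log (p' y / q y) - p y * log α) := by
        refine sum_congr rfl fun y _ => ?_
        rcases (hp.1 y).eq_or_lt with h | h
        · simp [← h]
        · rw [div_right_comm, log_div (div_pos (hpos y h) (hq y)).ne' hα.ne', mul_sub]
    _ = ∑ y, p y * log (p' y / q y) - log α := by
        rw [sum_sub_distrib, ← sum_mul, hp.2, one_mul]

lemma sum_sub_mul_le {Y : Type*} [Fintype Y] {a b c : Y → ℝ} {L : ℝ}
    (ha : ∀ y, 0 ≤ a y) (hb : ∀ y, 0 ≤ b y) (hc : ∀ y, |c y| ≤ L) :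
    ∑ y, (a y - b y) * c y ≤ (∑ y, a y + ∑ y, b y) * L := by
  rw [← sum_add_distrib, sum_mul]
  refine sum_le_sum fun y _ => ?_
  calc (a y - b y) * c y ≤ |a y - b y| * |c y| := by rw [← abs_mul]; exact le_abs_self _
    _ ≤ (a y + b y) * L :=
        mul_le_mul ((abs_sub _ _).trans_eq (by rw [abs_of_nonneg (ha y), abs_of_nonneg (hb y)]))
          (hc y) (abs_nonneg _) (add_nonneg (ha y) (hb y))

theorem kl_uniform_smoothing_general {S : Type*} [Fintype S] (T R : ℝ) (hT : 1 < T)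
    (p q p' : S → ℝ) (hp : IsDist p) (hq0 : ∀ y, 0 < q y)
    (hp' : ∀ y, p' y = (1 - 1 / T) * p y + (1 / T) * (1 / (Fintype.card S : ℝ)))
    (hratio : ∀ y, 1 / R ≤ p' y / q y ∧ p' y / q y ≤ R) :
    klR p q ≤ klR p' q + 2 * Real.log R / T - Real.log (1 - 1 / T) := by
  have : Nonempty S := univ_nonempty_iff.1 (nonempty_of_sum_ne_zero (hp.2.trans_ne one_ne_zero))
  set u : ℝ := 1 / (Fintype.card S : ℝ)
  have hu : 0 < u := by positivity
  have hsum_u : ∑ _y : S, u = 1 := by simp [u]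
  have hα : 0 < 1 - 1 / T := by rw [sub_pos, div_lt_one (by linarith)]; exact hT
  have hsmooth : ∀ y, (1 - 1 / T) * p y ≤ p' y := fun y => by
    rw [hp' y]; exact le_add_of_nonneg_right (by positivity)
  have hp'_pos : ∀ y, 0 < p' y := fun y => by
    rw [hp' y]; exact add_pos_of_nonneg_of_pos (mul_nonneg hα.le (hp.1 y)) (by positivity)
  have hlog : ∀ y, |log (p' y / q y)| ≤ log R := fun y =>
    abs_log_le_log_of_inv_le_of_le (div_pos (hp'_pos y) (hq0 y)) (hratio y).1 (hratio y).2
  have hcross : ∑ y, p y * log (p' y / q y)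
      = klR p' q + 1 / T * ∑ y, (p y - u) * log (p' y / q y) := by
    rw [klR, mul_sum, ← sum_add_distrib]
    refine sum_congr rfl fun y _ => ?_
    rw [hp' y]; ring
  have hbound : ∑ y, (p y - u) * log (p' y / q y) ≤ (1 + 1) * log R := by
    simpa only [hp.2, hsum_u] using sum_sub_mul_le hp.1 (fun _ => hu.le) hlog
  calc klR p q ≤ ∑ y, p y * log (p' y / q y) - log (1 - 1 / T) :=
        klR_le_sum_mul_log_div_sub_log hp hα hq0 hsmooth
    _ ≤ klR p' q + 1 / T * ((1 + 1) * log R) - log (1 - 1 / T) := by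
        rw [hcross]; gcongr
    _ = klR p' q + 2 * log R / T - log (1 - 1 / T) := by ring

/-- **KL divergence versus uniform smoothing.**
Let `S` be a finite set of size `N`, `T > 1` a real number, `u` the uniform distribution on
`S`, and `p' = (1 − 1/T)·p + (1/T)·u`.  If `1/R ≤ p'[y]/q[y] ≤ R` for all `y` (with `R ≥ 1`
and `q` everywhere positive), then
`KL(p, q) ≤ KL(p', q) + (2 log R)/T − log(1 − 1/T)`. -/
theorem kl_uniform_smoothing {S : Type*} [Fintype S] (T R : ℝ) (hT : 1 < T) (hR : 1 ≤ R)
    (p q p' : S → ℝ) (hp : IsDist p) (hq : IsDist q) (hq0 : ∀ y, 0 < q y)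
    (hp' : ∀ y, p' y = (1 - 1 / T) * p y + (1 / T) * (1 / (Fintype.card S : ℝ)))
    (hratio : ∀ y, 1 / R ≤ p' y / q y ∧ p' y / q y ≤ R) :
    klR p q ≤ klR p' q + 2 * Real.log R / T - Real.log (1 - 1 / T) :=
  kl_uniform_smoothing_general T R hT p q p' hp hq0 hp' hratio
end

section
/- Let p_1, p_2, q be probability distributions on a finite set Y, with q[y] > 0 whenever p_1[y] + p_2[y] > 0. Then max{ KL(p_1, q), KL(p_2, q) } ≥ (1/2)·KL(p_1, (p_1 + p_2)/2). -/
/-! The chain rule `KL(p₁, q) + KL(p₂, q) = KL(p₁, m) + KL(p₂, m) + 2 KL(m, q)` for the mixture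
`m = (p₁ + p₂)/2` together with Gibbs' inequality `KL(m, q) ≥ 0`, `KL(p₂, m) ≥ 0` gives
`2 max(KL(p₁, q), KL(p₂, q)) ≥ KL(p₁, m)`. -/

open Finset

lemma sub_le_mul_log_div {a b : ℝ} (ha : 0 ≤ a) (hb : 0 ≤ b) (hab : 0 < a → 0 < b) :
    a - b ≤ a * Real.log (a / b) := by
  rcases ha.eq_or_lt with rfl | ha
  · simpa using hb
  · have hb := hab ha
    have h := Real.one_sub_inv_le_log_of_pos (div_pos ha hb)
    rw [inv_div] at h
    calc a - b = a * (1 - b / a) := by field_simp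
      _ ≤ a * Real.log (a / b) := mul_le_mul_of_nonneg_left h ha.le

lemma mul_log_div_eq_add {a b c : ℝ} (h : a ≠ 0 → b ≠ 0 ∧ c ≠ 0) :
    a * Real.log (a / c) = a * Real.log (a / b) + a * Real.log (b / c) := by
  by_cases ha : a = 0
  · simp [ha]
  · obtain ⟨hb, hc⟩ := h ha
    rw [← mul_add, ← Real.log_mul (div_ne_zero ha hb) (div_ne_zero hb hc),
      div_mul_div_cancel₀ hb]

section KL

variable {Y : Type*} [Fintype Y]

theorem IsDist.midpoint {p₁ p₂ : Y → ℝ} (h₁ : IsDist p₁) (h₂ : IsDist p₂) :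
    IsDist (fun y => (p₁ y + p₂ y) / 2) := by
  refine ⟨fun y => by linarith [h₁.1 y, h₂.1 y], ?_⟩
  rw [← Finset.sum_div, Finset.sum_add_distrib, h₁.2, h₂.2]
  norm_num

lemma sum_sub_sum_le_klR {p r : Y → ℝ} (hp : ∀ y, 0 ≤ p y) (hr : ∀ y, 0 ≤ r y)
    (hsupp : ∀ y, 0 < p y → 0 < r y) :
    ∑ y, p y - ∑ y, r y ≤ klR p r := by
  rw [← Finset.sum_sub_distrib]
  exact Finset.sum_le_sum fun y _ => sub_le_mul_log_div (hp y) (hr y) (hsupp y)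

theorem klR_nonneg {p r : Y → ℝ} (hp : IsDist p) (hr : IsDist r)
    (hsupp : ∀ y, 0 < p y → 0 < r y) : 0 ≤ klR p r := by
  have h := sum_sub_sum_le_klR hp.1 hr.1 hsupp
  rw [hp.2, hr.2, sub_self] at h
  exact h

lemma klR_eq_klR_add_sum {p m q : Y → ℝ} (h : ∀ y, p y ≠ 0 → m y ≠ 0 ∧ q y ≠ 0) :
    klR p q = klR p m + ∑ y, p y * Real.log (m y / q y) := by
  rw [klR, klR, ← Finset.sum_add_distrib]
  exact Finset.sum_congr rfl fun y _ => mul_log_div_eq_add (h y)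

theorem klR_add_klR_eq_midpoint {p₁ p₂ q : Y → ℝ} (hp₁ : ∀ y, 0 ≤ p₁ y) (hp₂ : ∀ y, 0 ≤ p₂ y)
    (hsupp : ∀ y, 0 < p₁ y + p₂ y → 0 < q y) :
    klR p₁ q + klR p₂ q = klR p₁ (fun y => (p₁ y + p₂ y) / 2) +
      klR p₂ (fun y => (p₁ y + p₂ y) / 2) + 2 * klR (fun y => (p₁ y + p₂ y) / 2) q := by
  have hmid : ∀ y, (p₁ y ≠ 0 ∨ p₂ y ≠ 0) → (p₁ y + p₂ y) / 2 ≠ 0 ∧ q y ≠ 0 := fun y hy => by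
    have hpos : 0 < p₁ y + p₂ y := by
      rcases hy with hy | hy
      · linarith [(hp₁ y).lt_of_ne' hy, hp₂ y]
      · linarith [(hp₂ y).lt_of_ne' hy, hp₁ y]
    exact ⟨by positivity, (hsupp y hpos).ne'⟩
  have hcross : ∑ y, p₁ y * Real.log ((p₁ y + p₂ y) / 2 / q y) +
      ∑ y, p₂ y * Real.log ((p₁ y + p₂ y) / 2 / q y) =
      2 * klR (fun y => (p₁ y + p₂ y) / 2) q := by
    rw [klR, Finset.mul_sum, ← Finset.sum_add_distrib]
    exact Finset.sum_congr rfl fun y _ => by ring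
  rw [klR_eq_klR_add_sum fun y hy => hmid y (.inl hy), klR_eq_klR_add_sum fun y hy => hmid y (.inr hy),
    ← hcross]
  ring

end KL

/-- **Two-point KL lower bound (Le Cam style).**
If `q` is positive wherever `p₁ + p₂` is, then no `q` can be simultaneously KL-close to both
`p₁` and `p₂`: the larger of the two divergences is at least half the divergence of `p₁` from
the equal mixture `(p₁ + p₂)/2`. -/
theorem kl_two_point {Y : Type*} [Fintype Y] (p₁ p₂ q : Y → ℝ)
    (h₁ : IsDist p₁) (h₂ : IsDist p₂) (hq : IsDist q)
    (hsupp : ∀ y, 0 < p₁ y + p₂ y → 0 < q y) :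
    (1 / 2) * klR p₁ (fun y => (p₁ y + p₂ y) / 2) ≤ max (klR p₁ q) (klR p₂ q) := by
  have hm := h₁.midpoint h₂
  have hchain := klR_add_klR_eq_midpoint h₁.1 h₂.1 hsupp
  have hp₂m : 0 ≤ klR p₂ (fun y => (p₁ y + p₂ y) / 2) :=
    klR_nonneg h₂ hm fun y hy => by linarith [h₁.1 y]
  have hmq : 0 ≤ klR (fun y => (p₁ y + p₂ y) / 2) q :=
    klR_nonneg hm hq fun y hy => hsupp y (by linarith)
  linarith [le_max_left (klR p₁ q) (klR p₂ q), le_max_right (klR p₁ q) (klR p₂ q)]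
end
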